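/- arXiv:2407.02678 — 2 statements merged into one kernel-verified Lean document; each statement's English description precedes it below -/
import Mathlib

section
/- Let H_1, …, H_n be affine hyperplanes in ℝ^d (each H_k = { x ∈ ℝ^d : ⟨w_k, x⟩ + b_k = 0 } with w_k ≠ 0). Then the complement ℝ^d \ (H_1 ∪ ⋯ ∪ H_n) has at most Σ_{i=0}^{d} C(n, i) connected components, where C(n, i) denotes the binomial coefficient. In particular, for fixed n, this upper bound on the number of regions grows with the dimension d, and the number of regions spanned by an arrangement of n hyperplanes scales (up to this binomial bound) exponentially with the intrinsic dimension of the input space. -/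
/-!
Points of the complement on which the functionals `f k = ⟨w_k, ·⟩ + b_k` have the same signs lie
in a common convex cell, hence in the same component, so there are at most as many components
as realised sign patterns. If the realised patterns shatter a set `s` of indices, the linear
parts of the `f k`, `k ∈ s`, are linearly independent: a relation `∑ aₖ • (f k).linear = 0` makes
`∑ aₖ * f k` constant, while the cells realising the sign patterns of `a` and of `-a` make it
positive and negative respectively. So the patterns have VC dimension at most `d`, and the
Sauer–Shelah lemma bounds their number by `∑_{i ≤ d} C(n, i)`.
-/

open Matrix Finset

theorem ConnectedComponents.natCard_le_of_isPreconnected_fiber {X Y : Type*} [TopologicalSpace X]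
    {σ : X → Y} {𝒜 : Finset Y} (hσ : ∀ x, σ x ∈ 𝒜)
    (hfiber : ∀ y, IsPreconnected (σ ⁻¹' {y})) :
    Nat.card (ConnectedComponents X) ≤ #𝒜 := by
  set rep := Function.surjInv (ConnectedComponents.surjective_coe (α := X))
  have hrep : ∀ c, (rep c : ConnectedComponents X) = c :=
    Function.surjInv_eq ConnectedComponents.surjective_coe
  have hinj : Function.Injective fun c ↦ (⟨σ (rep c), hσ _⟩ : 𝒜) := by
    intro c₁ c₂ h
    have hσ₁₂ : σ (rep c₁) = σ (rep c₂) := congrArg Subtype.val h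
    rw [← hrep c₁, ← hrep c₂, ConnectedComponents.coe_eq_coe']
    exact (hfiber _).subset_connectedComponent rfl hσ₁₂
  simpa using Nat.card_le_card_of_injective _ hinj

namespace AffineMap

variable {ι E : Type*} [AddCommGroup E] [Module ℝ E]

def signRegion (f : ι → E →ᵃ[ℝ] ℝ) (s : Finset ι) : Set E :=
  (⋂ k ∈ s, f k ⁻¹' Set.Ioi 0) ∩ ⋂ (k) (_ : k ∉ s), f k ⁻¹' Set.Iio 0

theorem mem_signRegion {f : ι → E →ᵃ[ℝ] ℝ} {s : Finset ι} {x : E} :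
    x ∈ signRegion f s ↔ ∀ k, f k x ≠ 0 ∧ (0 < f k x ↔ k ∈ s) := by
  simp only [signRegion, Set.mem_inter_iff, Set.mem_iInter, Set.mem_preimage, Set.mem_Ioi,
    Set.mem_Iio, ← forall_and]
  refine forall_congr' fun k ↦ ?_
  by_cases hk : k ∈ s
  · simpa [hk] using fun h : 0 < f k x ↦ h.ne'
  · simp only [hk, iff_false, not_lt, IsEmpty.forall_iff, true_and, not_false_eq_true,
      forall_const]
    exact ⟨fun h ↦ ⟨h.ne, h.le⟩, fun h ↦ lt_of_le_of_ne h.2 h.1⟩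

theorem convex_signRegion (f : ι → E →ᵃ[ℝ] ℝ) (s : Finset ι) : Convex ℝ (signRegion f s) :=
  (convex_iInter₂ fun k _ ↦ (convex_Ioi 0).affine_preimage (f k)).inter
    (convex_iInter₂ fun k _ ↦ (convex_Iio 0).affine_preimage (f k))

theorem sum_mul_apply_eq_of_sum_smul_linear_eq_zero (f : ι → E →ᵃ[ℝ] ℝ) {s : Finset ι}
    {a : ι → ℝ} (ha : ∑ k ∈ s, a k • (f k).linear = 0) (x y : E) :
    ∑ k ∈ s, a k * f k x = ∑ k ∈ s, a k * f k y := by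
  have hlin : ∀ k, f k x - f k y = (f k).linear (x - y) := fun k ↦ by
    rw [← vsub_eq_sub, ← vsub_eq_sub, linearMap_vsub]
  rw [← sub_eq_zero, ← sum_sub_distrib]
  calc ∑ k ∈ s, (a k * f k x - a k * f k y) = (∑ k ∈ s, a k • (f k).linear) (x - y) := by
        simp only [LinearMap.sum_apply, LinearMap.smul_apply, smul_eq_mul, ← mul_sub, hlin]
    _ = 0 := by rw [ha, LinearMap.zero_apply]

open scoped Classical in
noncomputable def realizedSignSets [Fintype ι] (f : ι → E →ᵃ[ℝ] ℝ) : Finset (Finset ι) :=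
  {s | (signRegion f s).Nonempty}

variable [Fintype ι] {f : ι → E →ᵃ[ℝ] ℝ}

theorem mem_realizedSignSets {s : Finset ι} :
    s ∈ realizedSignSets f ↔ (signRegion f s).Nonempty := by
  classical
  simp [realizedSignSets]

variable [DecidableEq ι]

theorem exists_pos_sum_mul_of_shatters {s : Finset ι} (hs : (realizedSignSets f).Shatters s)
    {a : ι → ℝ} (ha : ∃ k ∈ s, a k ≠ 0) : ∃ x, 0 < ∑ k ∈ s, a k * f k x := by
  obtain ⟨u, hu, hsu⟩ := hs (filter_subset (fun k ↦ 0 < a k) s)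
  obtain ⟨x, hx⟩ := mem_realizedSignSets.1 hu
  have hmem : ∀ k ∈ s, (k ∈ u ↔ 0 < a k) := fun k hk ↦ by
    simpa [hk] using congrArg (k ∈ ·) hsu
  have hterm : ∀ k ∈ s, a k ≠ 0 → 0 < a k * f k x := fun k hk hak ↦ by
    obtain ⟨hne, hsign⟩ := mem_signRegion.1 hx k
    rcases hak.lt_or_gt with hneg | hpos
    · have hku : k ∉ u := fun h ↦ hneg.not_gt ((hmem k hk).1 h)
      exact mul_pos_of_neg_of_neg hneg <| lt_of_le_of_ne (not_lt.1 (mt hsign.1 hku)) hne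
    · exact mul_pos hpos (hsign.2 ((hmem k hk).2 hpos))
  refine ⟨x, sum_pos' (fun k hk ↦ ?_) (ha.imp fun k ⟨hk, hak⟩ ↦ ⟨hk, hterm k hk hak⟩)⟩
  rcases eq_or_ne (a k) 0 with hak | hak
  · simp [hak]
  · exact (hterm k hk hak).le

theorem linearIndepOn_linear_of_shatters {s : Finset ι} (hs : (realizedSignSets f).Shatters s) :
    LinearIndepOn ℝ (fun k ↦ (f k).linear) (s : Set ι) := by
  by_contra hdep
  obtain ⟨a, ha, hne⟩ := not_linearIndepOn_finset_iff.1 hdep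
  obtain ⟨x, hx⟩ := exists_pos_sum_mul_of_shatters hs hne
  obtain ⟨y, hy⟩ := exists_pos_sum_mul_of_shatters hs (a := -a) (by simpa using hne)
  have := sum_mul_apply_eq_of_sum_smul_linear_eq_zero f ha x y
  simp only [Pi.neg_apply, neg_mul, sum_neg_distrib] at hy
  linarith

theorem vcDim_realizedSignSets_le [FiniteDimensional ℝ E] :
    (realizedSignSets f).vcDim ≤ Module.finrank ℝ E := by
  refine Finset.sup_le fun s hs ↦ ?_
  have := (linearIndepOn_linear_of_shatters (mem_shatterer.1 hs)).fintype_card_le_finrank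
  simpa [Subspace.dual_finrank_eq] using this

theorem natCard_connectedComponents_le [TopologicalSpace E] [IsTopologicalAddGroup E]
    [ContinuousSMul ℝ E] [FiniteDimensional ℝ E] (f : ι → E →ᵃ[ℝ] ℝ) :
    Nat.card (ConnectedComponents {x : E | ∀ k, f k x ≠ 0}) ≤
      ∑ i ∈ range (Module.finrank ℝ E + 1), (Fintype.card ι).choose i := by
  set σ : {x : E | ∀ k, f k x ≠ 0} → Finset ι := fun x ↦ {k | 0 < f k x}
  have hσ : ∀ x, σ x ∈ realizedSignSets f := fun x ↦
    mem_realizedSignSets.2 ⟨x, mem_signRegion.2 fun k ↦ ⟨x.2 k, by simp [σ]⟩⟩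
  have hfiber : ∀ s, Subtype.val '' (σ ⁻¹' {s}) = signRegion f s := fun s ↦ by
    ext y
    refine ⟨?_, fun hy ↦ ?_⟩
    · rintro ⟨x, rfl, rfl⟩
      exact mem_signRegion.2 fun k ↦ ⟨x.2 k, by simp [σ]⟩
    · refine ⟨⟨y, fun k ↦ (mem_signRegion.1 hy k).1⟩, ?_, rfl⟩
      ext k
      simp [σ, (mem_signRegion.1 hy k).2]
  calc Nat.card (ConnectedComponents {x : E | ∀ k, f k x ≠ 0})
      ≤ #(realizedSignSets f) :=
        ConnectedComponents.natCard_le_of_isPreconnected_fiber hσ fun s ↦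
          Topology.IsInducing.subtypeVal.isPreconnected_image.1 <|
            hfiber s ▸ (convex_signRegion f s).isPreconnected
    _ ≤ #(realizedSignSets f).shatterer := card_le_card_shatterer _
    _ ≤ ∑ i ∈ Iic (realizedSignSets f).vcDim, (Fintype.card ι).choose i :=
        card_shatterer_le_sum_vcDim
    _ ≤ ∑ i ∈ range (Module.finrank ℝ E + 1), (Fintype.card ι).choose i := by
        rw [← Nat.range_succ_eq_Iic]
        exact sum_le_sum_of_subset <|
          range_subset_range.2 (Nat.succ_le_succ vcDim_realizedSignSets_le)

end AffineMap

theorem hyperplane_arrangement_components_le_general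
    (d n : ℕ)
    (w : Fin n → (Fin d → ℝ)) (b : Fin n → ℝ)
    (H : Fin n → Set (Fin d → ℝ))
    (hH : ∀ k : Fin n, H k = {x : Fin d → ℝ | w k ⬝ᵥ x + b k = 0}) :
    Nat.card (ConnectedComponents ↥((Set.univ : Set (Fin d → ℝ)) \ ⋃ k : Fin n, H k)) ≤
      ∑ i ∈ Finset.range (d + 1), n.choose i := by
  set f : Fin n → (Fin d → ℝ) →ᵃ[ℝ] ℝ := fun k ↦
    (dotProductBilin ℝ ℝ (w k)).toAffineMap + AffineMap.const ℝ _ (b k)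
  have hC : (Set.univ : Set (Fin d → ℝ)) \ ⋃ k, H k = {x | ∀ k, f k x ≠ 0} := by
    ext x
    simp [hH, f]
  rw [hC]
  simpa using AffineMap.natCard_connectedComponents_le f

/-- **Hyperplane arrangement region bound.**
The complement in `ℝ^d` of the union of `n` affine hyperplanes
`H_k = {x : ⟨w_k, x⟩ + b_k = 0}` (with `w_k ≠ 0`) has at most
`∑_{i=0}^{d} C(n, i)` connected components. -/
theorem hyperplane_arrangement_components_le
    (d n : ℕ)
    (w : Fin n → (Fin d → ℝ)) (b : Fin n → ℝ)
    (hw : ∀ k : Fin n, w k ≠ 0)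
    (H : Fin n → Set (Fin d → ℝ))
    (hH : ∀ k : Fin n, H k = {x : Fin d → ℝ | w k ⬝ᵥ x + b k = 0}) :
    Nat.card (ConnectedComponents ↥((Set.univ : Set (Fin d → ℝ)) \ ⋃ k : Fin n, H k)) ≤
      ∑ i ∈ Finset.range (d + 1), n.choose i :=
  hyperplane_arrangement_components_le_general d n w b H hH
end

section
/- Let f(x) = W₂ ReLU(W₁ x + b₁) + b₂ be a one-hidden-layer ReLU MLP with n hidden neurons on ℝ^D, and let S ⊆ ℝ^D be an affine subspace of dimension d (the intrinsic dimension of the input). Then the number of connected components of S \ (H_1 ∪ ⋯ ∪ H_n) — where H_k = { x ∈ ℝ^D : (W₁ x + b₁)_k = 0 } — is at most Σ_{i=0}^{d} C(n, i). Consequently, the number of linear regions that f induces on inputs confined to a d-dimensional affine subspace is at most Σ_{i=0}^{d} C(n, i), an upper bound that increases with the intrinsic dimension d of the input; hence for a fixed number of neurons one can increase the number of regions by increasing the intrinsic dimension of the input space. -/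
open Matrix Finset

open Finset Set

/-- Pascal-type sum identity. -/
lemma pascal_sum_aux (n d : ℕ) :
    ∑ i ∈ Finset.range (d + 1), (n + 1).choose i
      = ∑ i ∈ Finset.range (d + 1), n.choose i + ∑ i ∈ Finset.range d, n.choose i := by
  induction d with
  | zero => simp
  | succ d ih =>
    rw [Finset.sum_range_succ, ih, Finset.sum_range_succ (f := fun i => n.choose i) (n := d + 1),
      Finset.sum_range_succ (f := fun i => n.choose i) (n := d), Nat.choose_succ_succ]
    ring

/-- Realized strict sign patterns of a family of affine maps on an affine subspace. -/
def realizedPatterns {E : Type*} [AddCommGroup E] [Module ℝ E] {n : ℕ}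
    (S : AffineSubspace ℝ E) (g : Fin n → (E →ᵃ[ℝ] ℝ)) : Set (Fin n → Bool) :=
  {σ | ∃ x ∈ S, ∀ k, if σ k then 0 < g k x else g k x < 0}

lemma realizedPatterns_ncard_le {E : Type*} [AddCommGroup E] [Module ℝ E]
    [FiniteDimensional ℝ E] :
    ∀ (n d : ℕ) (S : AffineSubspace ℝ E), Module.finrank ℝ S.direction ≤ d →
      ∀ g : Fin n → (E →ᵃ[ℝ] ℝ),
      (realizedPatterns S g).ncard ≤ ∑ i ∈ Finset.range (d + 1), n.choose i := by
  intro n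
  induction n with
  | zero =>
    intro d S hd g
    have h1 : (realizedPatterns S g).ncard ≤ 1 := by
      have := Set.ncard_le_ncard (Set.subset_univ (realizedPatterns S g)) (Set.toFinite _)
      simpa [Set.ncard_univ, Nat.card_eq_fintype_card] using this
    refine h1.trans ?_
    calc 1 = Nat.choose 0 0 := rfl
      _ ≤ _ := Finset.single_le_sum (fun i _ => Nat.zero_le _) (Finset.mem_range.2 d.succ_pos)
  | succ n ih =>
    intro d S hd g
    set P : Set (Fin (n + 1) → Bool) := realizedPatterns S g with hP
    set Pt : Set (Fin (n + 1) → Bool) := {σ ∈ P | σ (Fin.last n) = true} with hPt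
    set Pf : Set (Fin (n + 1) → Bool) := {σ ∈ P | σ (Fin.last n) = false} with hPf
    set A1 : Set (Fin n → Bool) := Fin.init '' Pt with hA1
    set A2 : Set (Fin n → Bool) := Fin.init '' Pf with hA2
    have hPsub : P ⊆ Pt ∪ Pf := by
      intro σ hσ
      rcases Bool.eq_false_or_eq_true (σ (Fin.last n)) with h | h
      · exact Or.inl ⟨hσ, h⟩
      · exact Or.inr ⟨hσ, h⟩
    have hinj : ∀ (b : Bool), Set.InjOn Fin.init {σ ∈ P | σ (Fin.last n) = b} := by
      intro b σ hσ σ' hσ' h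
      funext k
      induction k using Fin.lastCases with
      | last => rw [hσ.2, hσ'.2]
      | cast k => exact congrFun h k
    have hcard : P.ncard ≤ A1.ncard + A2.ncard := by
      calc P.ncard ≤ (Pt ∪ Pf).ncard := Set.ncard_le_ncard hPsub (Set.toFinite _)
        _ ≤ Pt.ncard + Pf.ncard := Set.ncard_union_le _ _
        _ = A1.ncard + A2.ncard := by
            rw [hA1, hA2, Set.ncard_image_of_injOn (hinj true), Set.ncard_image_of_injOn (hinj false)]
    have hunion : A1.ncard + A2.ncard = (A1 ∪ A2).ncard + (A1 ∩ A2).ncard :=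
      (Set.ncard_union_add_ncard_inter A1 A2 (Set.toFinite _) (Set.toFinite _)).symm
    have hAsub : A1 ∪ A2 ⊆ realizedPatterns S (fun k : Fin n => g k.castSucc) := by
      rintro τ (⟨σ, ⟨⟨x, hxS, hx⟩, -⟩, rfl⟩ | ⟨σ, ⟨⟨x, hxS, hx⟩, -⟩, rfl⟩) <;>
        exact ⟨x, hxS, fun k => hx k.castSucc⟩
    have hmono : ∀ d' : ℕ, ∑ i ∈ Finset.range (d' + 1), n.choose i
        ≤ ∑ i ∈ Finset.range (d' + 1), (n + 1).choose i :=
      fun d' => Finset.sum_le_sum fun i _ => Nat.choose_le_choose i (Nat.le_succ n)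
    by_cases hint : (A1 ∩ A2).Nonempty
    · -- both signs of the last map are realized; cut with its zero set
      set glast : E →ᵃ[ℝ] ℝ := g (Fin.last n) with hglast
      set Z : AffineSubspace ℝ E :=
        S ⊓ AffineSubspace.comap glast (AffineSubspace.mk' (0 : ℝ) ⊥) with hZ
      have hZmem : ∀ w : E, w ∈ Z ↔ w ∈ S ∧ glast w = 0 := by
        intro w
        rw [hZ, AffineSubspace.mem_inf_iff, AffineSubspace.mem_comap,
          AffineSubspace.mem_mk']
        simp
      have hsub2 : A1 ∩ A2 ⊆ realizedPatterns Z (fun k : Fin n => g k.castSucc) := by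
        rintro τ ⟨⟨σ₁, ⟨⟨x, hxS, hx⟩, hl₁⟩, rfl⟩, σ₂, ⟨⟨y, hyS, hy⟩, hl₂⟩, hinit₂⟩
        have ha : 0 < glast x := by have := hx (Fin.last n); rwa [hl₁, if_pos rfl] at this
        have hb : glast y < 0 := by have := hy (Fin.last n); rwa [hl₂, if_neg (by simp)] at this
        have hab : glast x - glast y ≠ 0 := by linarith
        set t : ℝ := glast x / (glast x - glast y) with ht
        have ht0 : 0 < t := div_pos ha (by linarith)
        have ht1 : t < 1 := (div_lt_one (by linarith)).2 (by linarith)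
        set z : E := AffineMap.lineMap x y t with hz
        have hzS : z ∈ S := AffineMap.lineMap_mem t hxS hyS
        have hval : ∀ k : Fin (n + 1), g k z = t * (g k y - g k x) + g k x := by
          intro k
          rw [hz, AffineMap.apply_lineMap, AffineMap.lineMap_apply_module]
          simp only [smul_eq_mul]
          ring
        have hz0 : glast z = 0 := by
          rw [hval, ht]; field_simp; ring
        refine ⟨z, (hZmem z).2 ⟨hzS, hz0⟩, fun k => ?_⟩
        have h1 := hx k.castSucc
        have h2 := hy k.castSucc
        have e2 : σ₂ k.castSucc = Fin.init σ₁ k := congrFun hinit₂ k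
        rw [e2] at h2
        have e1 : Fin.init σ₁ k = σ₁ k.castSucc := rfl
        rw [e1] at h2 ⊢
        have hv := hval k.castSucc
        rw [hv]
        cases hbk : σ₁ k.castSucc <;> rw [hbk] at h1 h2 <;>
          simp only [Bool.false_eq_true, if_true, if_false, ite_true, ite_false] at h1 h2 ⊢ <;>
          nlinarith
      obtain ⟨τ, hτ⟩ := hint
      obtain ⟨z₀, hz₀Z, -⟩ := hsub2 hτ
      -- dimension of Z drops
      obtain ⟨⟨σ₁, ⟨⟨x, hxS, hx⟩, hl₁⟩, rfl⟩, σ₂, ⟨⟨y, hyS, hy⟩, hl₂⟩, hinit₂⟩ := hτ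
      have ha : 0 < glast x := by have := hx (Fin.last n); rwa [hl₁, if_pos rfl] at this
      have hb : glast y < 0 := by have := hy (Fin.last n); rwa [hl₂, if_neg (by simp)] at this
      have hv : x -ᵥ y ∈ S.direction := AffineSubspace.vsub_mem_direction hxS hyS
      have hlv : glast.linear (x -ᵥ y) = glast x - glast y := by
        rw [AffineMap.linearMap_vsub]; rfl
      have hvnot : x -ᵥ y ∉ Z.direction := by
        intro h
        rw [AffineSubspace.mem_direction_iff_eq_vsub ⟨z₀, hz₀Z⟩] at h
        obtain ⟨p, hp, q, hq, hpq⟩ := h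
        have : glast.linear (x -ᵥ y) = glast p - glast q := by
          rw [hpq, AffineMap.linearMap_vsub]; rfl
        rw [((hZmem p).1 hp).2, ((hZmem q).1 hq).2] at this
        rw [hlv] at this
        linarith
      have hlt : Z.direction < S.direction :=
        lt_of_le_of_ne (AffineSubspace.direction_le inf_le_left)
          (fun he => hvnot (he ▸ hv))
      have hfr : Module.finrank ℝ Z.direction < Module.finrank ℝ S.direction :=
        Submodule.finrank_lt_finrank_of_lt hlt
      rcases d with _ | d'
      · omega
      have hZd : Module.finrank ℝ Z.direction ≤ d' := by omega
      have ihA := ih (d' + 1) S hd (fun k : Fin n => g k.castSucc)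
      have ihB := ih d' Z hZd (fun k : Fin n => g k.castSucc)
      calc P.ncard ≤ A1.ncard + A2.ncard := hcard
        _ = (A1 ∪ A2).ncard + (A1 ∩ A2).ncard := hunion
        _ ≤ (∑ i ∈ Finset.range (d' + 1 + 1), n.choose i)
              + ∑ i ∈ Finset.range (d' + 1), n.choose i := by
            gcongr
            · exact (Set.ncard_le_ncard hAsub (Set.toFinite _)).trans ihA
            · exact (Set.ncard_le_ncard hsub2 (Set.toFinite _)).trans ihB
        _ = ∑ i ∈ Finset.range (d' + 1 + 1), (n + 1).choose i :=
            (pascal_sum_aux n (d' + 1)).symm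
    · have hempty : (A1 ∩ A2).ncard = 0 := by
        rw [Set.not_nonempty_iff_eq_empty.1 hint, Set.ncard_empty]
      have ihA := ih d S hd (fun k : Fin n => g k.castSucc)
      calc P.ncard ≤ A1.ncard + A2.ncard := hcard
        _ = (A1 ∪ A2).ncard + (A1 ∩ A2).ncard := hunion
        _ = (A1 ∪ A2).ncard := by rw [hempty, add_zero]
        _ ≤ ∑ i ∈ Finset.range (d + 1), n.choose i :=
            (Set.ncard_le_ncard hAsub (Set.toFinite _)).trans ihA
        _ ≤ ∑ i ∈ Finset.range (d + 1), (n + 1).choose i := hmono d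

/-- **Linear-region bound for a ReLU MLP on an affine subspace of intrinsic dimension `d`.**
Let `f(x) = W₂ ReLU(W₁ x + b₁) + b₂` be a one-hidden-layer ReLU MLP with `n` hidden
neurons on `ℝ^D`, and let `S` be a (nonempty) affine subspace of `ℝ^D` of dimension `d`.
Then the number of connected components of `S \ (H₁ ∪ ⋯ ∪ Hₙ)`, where
`H_k = {x : (W₁ x + b₁)_k = 0}` are the activation hyperplanes, is at most
`∑_{i=0}^{d} C(n, i)`; this bounds the number of linear regions `f` induces on inputs
confined to `S`. -/
theorem mlp_linear_regions_on_affine_subspace_le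
    (D n m d : ℕ)
    (W₁ : Matrix (Fin n) (Fin D) ℝ) (b₁ : Fin n → ℝ)
    (W₂ : Matrix (Fin m) (Fin n) ℝ) (b₂ : Fin m → ℝ)
    (f : (Fin D → ℝ) → (Fin m → ℝ))
    (hf : ∀ x : Fin D → ℝ,
      f x = W₂.mulVec (fun k => max ((W₁.mulVec x + b₁) k) 0) + b₂)
    (S : AffineSubspace ℝ (Fin D → ℝ))
    (hSne : (S : Set (Fin D → ℝ)).Nonempty)
    (hSdim : Module.finrank ℝ S.direction = d)
    (H : Fin n → Set (Fin D → ℝ))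
    (hH : ∀ k : Fin n, H k = {x : Fin D → ℝ | (W₁.mulVec x + b₁) k = 0}) :
    Nat.card (ConnectedComponents ↥((S : Set (Fin D → ℝ)) \ ⋃ k : Fin n, H k)) ≤
      ∑ i ∈ Finset.range (d + 1), n.choose i := by
  classical
  -- the activation functions, as affine maps
  set g : Fin n → ((Fin D → ℝ) →ᵃ[ℝ] ℝ) := fun k =>
    { toFun := fun x => W₁.mulVec x k + b₁ k
      linear := (LinearMap.proj k).comp W₁.mulVecLin
      map_vadd' := by
        intro p v
        simp only [vadd_eq_add, LinearMap.comp_apply, LinearMap.proj_apply,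
          Matrix.mulVecLin_apply, Matrix.mulVec_add, Pi.add_apply]
        ring } with hg
  set T : Set (Fin D → ℝ) := (S : Set (Fin D → ℝ)) \ ⋃ k : Fin n, H k with hT
  have hgval : ∀ (k : Fin n) (x : Fin D → ℝ), g k x = W₁.mulVec x k + b₁ k := fun _ _ => rfl
  have hTmem : ∀ x, x ∈ T ↔ x ∈ S ∧ ∀ k, g k x ≠ 0 := by
    intro x
    simp only [hT, Set.mem_diff, Set.mem_iUnion, not_exists, SetLike.mem_coe]
    refine and_congr_right fun _ => forall_congr' fun k => ?_
    rw [hH k, hgval]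
    simp [Set.mem_setOf_eq]
  -- the (convex) open pattern regions
  set R : (Fin n → Bool) → Set (Fin D → ℝ) := fun σ =>
    (S : Set (Fin D → ℝ)) ∩ ⋂ k, (g k) ⁻¹' (if σ k then Set.Ioi (0:ℝ) else Set.Iio 0) with hR
  have hRmem : ∀ σ w, w ∈ R σ ↔ (w ∈ S ∧ ∀ k, if σ k then 0 < g k w else g k w < 0) := by
    intro σ w
    simp only [hR, Set.mem_inter_iff, Set.mem_iInter, Set.mem_preimage, SetLike.mem_coe]
    refine and_congr_right fun _ => forall_congr' fun k => ?_
    split <;> simp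
  have hRT : ∀ σ, R σ ⊆ T := by
    intro σ w hw
    obtain ⟨hwS, hw2⟩ := (hRmem σ w).1 hw
    refine (hTmem w).2 ⟨hwS, fun k => ?_⟩
    have := hw2 k
    split at this <;> intro h0 <;> rw [h0] at this <;> simp at this
  have hRconv : ∀ σ, Convex ℝ (R σ) := by
    intro σ
    refine (AffineSubspace.convex S).inter (convex_iInter fun k => ?_)
    split
    · exact (convex_Ioi (0:ℝ)).affine_preimage (g k)
    · exact (convex_Iio (0:ℝ)).affine_preimage (g k)
  -- a surjection from realized patterns onto connected components
  have hchoose : ∀ σ : {σ // σ ∈ realizedPatterns S g}, ∃ w, w ∈ R σ.1 := by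
    rintro ⟨σ, x, hxS, hx⟩
    exact ⟨x, (hRmem σ x).2 ⟨hxS, hx⟩⟩
  set F : {σ // σ ∈ realizedPatterns S g} → ConnectedComponents ↥T := fun σ =>
    ConnectedComponents.mk ⟨(hchoose σ).choose, hRT σ.1 (hchoose σ).choose_spec⟩ with hF
  have hsamecomp : ∀ (σ) (u v : ↥T), ↑u ∈ R σ → ↑v ∈ R σ →
      (ConnectedComponents.mk u = ConnectedComponents.mk v) := by
    intro σ u v hu hv
    have hpre : IsPreconnected (Subtype.val ⁻¹' (R σ) : Set ↥T) := by
      apply Topology.IsInducing.subtypeVal.isPreconnected_image.mp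
      rw [Subtype.image_preimage_coe, Set.inter_eq_self_of_subset_right (hRT σ)]
      exact (hRconv σ).isPreconnected
    exact ConnectedComponents.coe_eq_coe.2
      (connectedComponent_eq (hpre.subset_connectedComponent hu hv))
  have hsurj : Function.Surjective F := by
    intro c
    obtain ⟨y, rfl⟩ := ConnectedComponents.surjective_coe c
    obtain ⟨hyS, hyne⟩ := (hTmem ↑y).1 y.2
    set σy : Fin n → Bool := fun k => decide (0 < g k ↑y) with hσy
    have hyR : (y : Fin D → ℝ) ∈ R σy := by
      refine (hRmem σy ↑y).2 ⟨hyS, fun k => ?_⟩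
      by_cases hk : 0 < g k ↑y
      · simp [hσy, hk]
      · have : g k ↑y < 0 := lt_of_le_of_ne (not_lt.1 hk) (hyne k)
        simp [hσy, hk, this]
    have hσmem : σy ∈ realizedPatterns S g := ⟨↑y, hyS, ((hRmem σy ↑y).1 hyR).2⟩
    exact ⟨⟨σy, hσmem⟩, hsamecomp σy _ y (hchoose ⟨σy, hσmem⟩).choose_spec hyR⟩
  calc Nat.card (ConnectedComponents ↥T)
      ≤ Nat.card {σ // σ ∈ realizedPatterns S g} := Nat.card_le_card_of_surjective F hsurj
    _ = (realizedPatterns S g).ncard := Nat.card_coe_set_eq _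
    _ ≤ ∑ i ∈ Finset.range (d + 1), n.choose i :=
        realizedPatterns_ncard_le n d S (le_of_eq hSdim) g
end
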